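/- If G is a class 2 graph, then for every integer k with 2 ≤ k ≤ Δ(G), G contains a subgraph that is k-critical. -/

import Mathlib

open SimpleGraph

variable {V : Type*}

/-- `c` is a proper edge coloring of `G` using colors `0, …, n-1`:
every edge gets a color `< n`, and distinct edges sharing an endpoint
receive distinct colors. -/
def IsProperEdgeColoring (G : SimpleGraph V) (n : ℕ) (c : Sym2 V → ℕ) : Prop :=
  (∀ e ∈ G.edgeSet, c e < n) ∧
    ∀ e₁ ∈ G.edgeSet, ∀ e₂ ∈ G.edgeSet, e₁ ≠ e₂ → (∃ v, v ∈ e₁ ∧ v ∈ e₂) →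
      c e₁ ≠ c e₂

/-- The edge chromatic number `χ'(G)`: the least number of colors in a proper
edge coloring of `G`. -/
noncomputable def edgeChromaticNumber (G : SimpleGraph V) : ℕ :=
  sInf {n | ∃ c, IsProperEdgeColoring G n c}

/-- The degree `d_G(v)` of a vertex. -/
noncomputable def deg (G : SimpleGraph V) (v : V) : ℕ := (G.neighborSet v).ncard

/-- The maximum vertex degree `Δ(G)`. -/
noncomputable def maxDeg (G : SimpleGraph V) : ℕ := sSup {d | ∃ v, deg G v = d}

/-- `G` is critical: it is class 2 (i.e. `χ'(G) ≠ Δ(G)`) and every proper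
subgraph `H` of `G` satisfies `χ'(H) < χ'(G)`. -/
def IsCritical (G : SimpleGraph V) : Prop :=
  edgeChromaticNumber G ≠ maxDeg G ∧
    ∀ H : G.Subgraph, H ≠ ⊤ → edgeChromaticNumber H.coe < edgeChromaticNumber G

/-- `G` is `k`-critical: critical with maximum degree `k`. -/
def IsKCritical (G : SimpleGraph V) (k : ℕ) : Prop :=
  IsCritical G ∧ maxDeg G = k

/-!
Vizing's theorem, proved with Misra–Gries fans and Kempe chains, gives `χ' ≤ Δ + 1`, so a class 2
graph has `χ' = Δ + 1`. An edge-minimal subgraph with `χ' ≥ j + 2` and `Δ ≤ j + 1` is critical with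
`Δ = j + 1`. To step down from `j + 1` to `j`, delete an edge `vu` with `deg v = j + 1` and color
the rest with `j + 1` colors: the colors `α` missing at `v` and `γ` missing at `u` differ, and since
`j + 1 ≥ 3` there is a third color `β`. Every vertex of degree `j + 1` sees `β`, so deleting the
`β`-edges lowers `Δ` to `j` while `χ'` drops by at most one. Iterating down to `k` and taking an
edge-minimal subgraph once more gives a `k`-critical graph, which is a subgraph of `G` once its
isolated vertices are discarded.
-/

open scoped Classical

namespace SimpleGraph

def EdgeColorable (G : SimpleGraph V) (n : ℕ) : Prop :=
  ∃ c, IsProperEdgeColoring G n c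

end SimpleGraph

def IsFreeColor (G : SimpleGraph V) (c : Sym2 V → ℕ) (v : V) (a : ℕ) : Prop :=
  ∀ e ∈ G.edgeSet, v ∈ e → c e ≠ a

section Basic

variable {G H : SimpleGraph V} {n : ℕ} {c : Sym2 V → ℕ} {v : V} {a : ℕ}

theorem IsProperEdgeColoring.mono (hc : IsProperEdgeColoring G n c) (h : H ≤ G) :
    IsProperEdgeColoring H n c :=
  ⟨fun e he => hc.1 e (edgeSet_mono h he),
    fun e₁ h₁ e₂ h₂ => hc.2 e₁ (edgeSet_mono h h₁) e₂ (edgeSet_mono h h₂)⟩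

theorem IsProperEdgeColoring.ne_of_adj (hc : IsProperEdgeColoring G n c) {w₁ w₂ : V}
    (h₁ : G.Adj v w₁) (h₂ : G.Adj v w₂) (hne : w₁ ≠ w₂) : c s(v, w₁) ≠ c s(v, w₂) :=
  hc.2 _ h₁ _ h₂ (fun h => hne (Sym2.congr_right.1 h))
    ⟨v, Sym2.mem_mk_left _ _, Sym2.mem_mk_left _ _⟩

theorem IsFreeColor.mono (hv : IsFreeColor G c v a) (h : H ≤ G) : IsFreeColor H c v a :=
  fun e he => hv e (edgeSet_mono h he)

theorem exists_adj_of_not_isFreeColor (h : ¬ IsFreeColor G c v a) :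
    ∃ w, G.Adj v w ∧ c s(v, w) = a := by
  simp only [IsFreeColor, not_forall, not_not] at h
  obtain ⟨e, he, hve, rfl⟩ := h
  have hw : s(v, Sym2.Mem.other hve) = e := Sym2.other_spec hve
  exact ⟨_, by rwa [← hw] at he, by rw [hw]⟩

theorem IsProperEdgeColoring.degree_le_card [Fintype (H.neighborSet v)]
    (hc : IsProperEdgeColoring G n c) (hH : H ≤ G) (S : Finset ℕ)
    (hS : ∀ w, H.Adj v w → c s(v, w) ∈ S) : H.degree v ≤ S.card := by
  rw [← card_neighborFinset_eq_degree]
  have hinj : Set.InjOn (fun w => c s(v, w)) (H.neighborFinset v) := fun w₁ h₁ w₂ h₂ h => by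
    by_contra hne
    exact hc.ne_of_adj (hH ((H.mem_neighborFinset v w₁).1 h₁))
      (hH ((H.mem_neighborFinset v w₂).1 h₂)) hne h
  rw [← Finset.card_image_of_injOn hinj]
  exact Finset.card_le_card fun _ hb => by
    obtain ⟨w, hw, rfl⟩ := Finset.mem_image.1 hb
    exact hS w ((H.mem_neighborFinset v w).1 hw)

theorem IsProperEdgeColoring.degree_add_card_le [Fintype (G.neighborSet v)]
    (hc : IsProperEdgeColoring G n c) (S : Finset ℕ) (hS : S ⊆ Finset.range n)
    (hfree : ∀ a ∈ S, IsFreeColor G c v a) :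
    G.degree v + S.card ≤ n := by
  have h := hc.degree_le_card (v := v) le_rfl (Finset.range n \ S) fun w hw =>
    Finset.mem_sdiff.2 ⟨Finset.mem_range.2 (hc.1 _ hw), fun ha => hfree _ ha _ hw (by simp) rfl⟩
  rw [Finset.card_sdiff_of_subset hS, Finset.card_range] at h
  have := Finset.card_le_card hS
  rw [Finset.card_range] at this
  omega

theorem IsProperEdgeColoring.degree_add_two_le [Fintype (G.neighborSet v)]
    (hc : IsProperEdgeColoring G n c) {a b : ℕ} (ha : a < n) (hb : b < n) (hab : a ≠ b)
    (hfa : IsFreeColor G c v a) (hfb : IsFreeColor G c v b) :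
    G.degree v + 2 ≤ n := by
  have := hc.degree_add_card_le (v := v) {a, b} (by simp [Finset.insert_subset_iff, ha, hb])
    (by simp [hfa, hfb])
  rwa [Finset.card_pair hab] at this

theorem exists_isFreeColor_of_degree_lt [Fintype (G.neighborSet v)] (c : Sym2 V → ℕ)
    (hv : G.degree v < n) : ∃ a < n, IsFreeColor G c v a := by
  by_contra! h
  have hsub : Finset.range n ⊆ (G.neighborFinset v).image (fun w => c s(v, w)) := fun a ha => by
    obtain ⟨w, hw, rfl⟩ :=
      exists_adj_of_not_isFreeColor fun hfree => h a (Finset.mem_range.1 ha) hfree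
    exact Finset.mem_image_of_mem _ ((G.mem_neighborFinset v w).2 hw)
  have := (Finset.card_le_card hsub).trans Finset.card_image_le
  rw [Finset.card_range, card_neighborFinset_eq_degree] at this
  omega

section Fintype

variable [Fintype V]

theorem edgeColorable_card_edgeFinset (G : SimpleGraph V) :
    G.EdgeColorable G.edgeFinset.card := by
  refine ⟨fun e => G.edgeFinset.toList.idxOf e, fun e he => ?_, fun e₁ h₁ e₂ h₂ hne _ h => ?_⟩
  · rw [← Finset.length_toList]
    exact List.idxOf_lt_length_iff.2 (by simpa using he)
  · exact hne ((List.idxOf_inj (by simpa using h₁)).1 h)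

theorem edgeColorable_edgeChromaticNumber (G : SimpleGraph V) :
    G.EdgeColorable (edgeChromaticNumber G) :=
  Nat.sInf_mem (s := {n | ∃ c, IsProperEdgeColoring G n c}) ⟨_, edgeColorable_card_edgeFinset G⟩

theorem edgeChromaticNumber_le_iff : edgeChromaticNumber G ≤ n ↔ G.EdgeColorable n := by
  refine ⟨fun h => ?_, fun h => Nat.sInf_le h⟩
  obtain ⟨c, hc⟩ := edgeColorable_edgeChromaticNumber G
  exact ⟨c, fun e he => (hc.1 e he).trans_le h, hc.2⟩

end Fintype

end Basic

section Copy

variable {W : Type*} {G : SimpleGraph V} {H : SimpleGraph W} {n : ℕ}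

theorem SimpleGraph.EdgeColorable.edgeChromaticNumber_le (h : G.EdgeColorable n) :
    edgeChromaticNumber G ≤ n :=
  Nat.sInf_le h

theorem SimpleGraph.EdgeColorable.of_copy (f : Copy H G) (hG : G.EdgeColorable n) :
    H.EdgeColorable n := by
  obtain ⟨c, hc⟩ := hG
  have hmem : ∀ e ∈ H.edgeSet, Sym2.map f e ∈ G.edgeSet := fun e he => by
    simpa using f.toHom.map_mem_edgeSet he
  refine ⟨fun e => c (Sym2.map f e), fun e he => hc.1 _ (hmem e he),
    fun e₁ h₁ e₂ h₂ hne ⟨v, hv₁, hv₂⟩ => hc.2 _ (hmem e₁ h₁) _ (hmem e₂ h₂) ?_ ⟨f v, ?_, ?_⟩⟩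
  · exact fun h => hne (Sym2.map.injective f.injective h)
  · exact Sym2.mem_map.2 ⟨v, hv₁, rfl⟩
  · exact Sym2.mem_map.2 ⟨v, hv₂, rfl⟩

theorem SimpleGraph.EdgeColorable.of_copy_of_surjective (f : Copy H G)
    (hf : ∀ e ∈ G.edgeSet, ∃ e' ∈ H.edgeSet, Sym2.map f e' = e) (hH : H.EdgeColorable n) :
    G.EdgeColorable n := by
  obtain ⟨c, hc⟩ := hH
  refine ⟨fun e => if h : ∃ e' ∈ H.edgeSet, Sym2.map f e' = e then c h.choose else 0, ?_, ?_⟩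
  · intro e he
    simp only [dif_pos (hf e he)]
    exact hc.1 _ (hf e he).choose_spec.1
  · rintro e₁ h₁ e₂ h₂ hne ⟨v, hv₁, hv₂⟩
    simp only [dif_pos (hf e₁ h₁), dif_pos (hf e₂ h₂)]
    obtain ⟨he₁, hm₁⟩ := (hf e₁ h₁).choose_spec
    obtain ⟨he₂, hm₂⟩ := (hf e₂ h₂).choose_spec
    refine hc.2 _ he₁ _ he₂ (fun h => hne (by rw [← hm₁, ← hm₂, h])) ?_
    rw [← hm₁] at hv₁
    rw [← hm₂] at hv₂
    obtain ⟨u₁, hu₁, rfl⟩ := Sym2.mem_map.1 hv₁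
    obtain ⟨u₂, hu₂, hu⟩ := Sym2.mem_map.1 hv₂
    exact ⟨u₁, hu₁, f.injective hu ▸ hu₂⟩

theorem SimpleGraph.Copy.edgeChromaticNumber_le [Fintype V] (f : Copy H G) :
    edgeChromaticNumber H ≤ edgeChromaticNumber G :=
  ((edgeColorable_edgeChromaticNumber G).of_copy f).edgeChromaticNumber_le

theorem edgeChromaticNumber_induce_of_support_subset [Fintype V] {s : Set V}
    (h : G.support ⊆ s) : edgeChromaticNumber (G.induce s) = edgeChromaticNumber G := by
  refine le_antisymm (Copy.induce G s).edgeChromaticNumber_le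
    (EdgeColorable.edgeChromaticNumber_le ?_)
  refine (edgeColorable_edgeChromaticNumber _).of_copy_of_surjective (Copy.induce G s)
    fun e he => ?_
  induction e using Sym2.ind with
  | _ x y =>
    exact ⟨s(⟨x, h ⟨y, he⟩⟩, ⟨y, h ⟨x, he.symm⟩⟩), he, rfl⟩

end Copy

theorem deg_eq_degree (G : SimpleGraph V) (v : V) [Fintype (G.neighborSet v)] :
    deg G v = G.degree v := by
  rw [deg, ← card_neighborFinset_eq_degree, neighborFinset_def, Set.ncard_eq_toFinset_card']

section MaxDegree

variable [Fintype V] {G : SimpleGraph V} {n : ℕ}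

theorem maxDeg_eq_maxDegree (G : SimpleGraph V) [DecidableRel G.Adj] :
    maxDeg G = G.maxDegree := by
  have hub : G.maxDegree ∈ upperBounds {d | ∃ v, deg G v = d} := by
    rintro _ ⟨v, rfl⟩
    exact (deg_eq_degree G v).trans_le (degree_le_maxDegree G v)
  refine le_antisymm (csSup_le' hub) (maxDegree_le_of_forall_degree_le _ _ fun v => ?_)
  exact (deg_eq_degree G v).symm.trans_le (le_csSup ⟨_, hub⟩ ⟨v, rfl⟩)

theorem maxDegree_le_of_edgeColorable [DecidableRel G.Adj] (h : G.EdgeColorable n) :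
    G.maxDegree ≤ n := by
  obtain ⟨c, hc⟩ := h
  refine maxDegree_le_of_forall_degree_le _ _ fun v => ?_
  simpa using hc.degree_le_card (v := v) le_rfl (Finset.range n) fun w hw =>
    Finset.mem_range.2 (hc.1 _ hw)

theorem maxDegree_le_edgeChromaticNumber (G : SimpleGraph V) [DecidableRel G.Adj] :
    G.maxDegree ≤ edgeChromaticNumber G :=
  maxDegree_le_of_edgeColorable (edgeColorable_edgeChromaticNumber G)

end MaxDegree

section Recoloring

variable {G : SimpleGraph V} {n : ℕ} {c : Sym2 V → ℕ} {x y : V} {a : ℕ}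

theorem mem_edgeSet_deleteEdges_singleton {e e' : Sym2 V} :
    e ∈ (G.deleteEdges {e'}).edgeSet ↔ e ∈ G.edgeSet ∧ e ≠ e' := by
  rw [edgeSet_deleteEdges, Set.mem_sdiff, Set.mem_singleton_iff]

theorem deleteEdges_singleton_lt {e : Sym2 V} (he : e ∈ G.edgeSet) : G.deleteEdges {e} < G :=
  lt_of_le_of_ne (deleteEdges_le _) fun h => by
    rw [← h] at he
    simp at he

theorem IsProperEdgeColoring.update (hc : IsProperEdgeColoring (G.deleteEdges {s(x, y)}) n c)
    (ha : a < n) (hx : IsFreeColor (G.deleteEdges {s(x, y)}) c x a)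
    (hy : IsFreeColor (G.deleteEdges {s(x, y)}) c y a) :
    IsProperEdgeColoring G n (Function.update c s(x, y) a) := by
  have hmem : ∀ e ∈ G.edgeSet, e ≠ s(x, y) → e ∈ (G.deleteEdges {s(x, y)}).edgeSet :=
    fun e he hne => mem_edgeSet_deleteEdges_singleton.2 ⟨he, hne⟩
  have hfree : ∀ e ∈ G.edgeSet, e ≠ s(x, y) → ∀ v ∈ s(x, y), v ∈ e → c e ≠ a := by
    intro e he hne v hv hve
    rcases Sym2.mem_iff.1 hv with rfl | rfl
    exacts [hx e (hmem e he hne) hve, hy e (hmem e he hne) hve]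
  refine ⟨fun e he => ?_, fun e₁ h₁ e₂ h₂ hne ⟨v, hv₁, hv₂⟩ => ?_⟩
  · by_cases h : e = s(x, y)
    · simpa [h] using ha
    · simpa [h] using hc.1 e (hmem e he h)
  by_cases m₁ : e₁ = s(x, y) <;> by_cases m₂ : e₂ = s(x, y)
  · exact absurd (m₁.trans m₂.symm) hne
  · subst m₁
    simpa [m₂] using (hfree e₂ h₂ m₂ v hv₁ hv₂).symm
  · subst m₂
    simpa [m₁] using hfree e₁ h₁ m₁ v hv₂ hv₁
  · simpa [m₁, m₂] using hc.2 e₁ (hmem e₁ h₁ m₁) e₂ (hmem e₂ h₂ m₂) hne ⟨v, hv₁, hv₂⟩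

theorem edgeChromaticNumber_le_deleteEdges_add_one [Fintype V] (G : SimpleGraph V)
    (M : Set (Sym2 V)) (hM : ∀ e₁ ∈ M, ∀ e₂ ∈ M, e₁ ≠ e₂ → ∀ v ∈ e₁, v ∉ e₂) :
    edgeChromaticNumber G ≤ edgeChromaticNumber (G.deleteEdges M) + 1 := by
  obtain ⟨c, hc⟩ := edgeColorable_edgeChromaticNumber (G.deleteEdges M)
  set m := edgeChromaticNumber (G.deleteEdges M)
  have hmem : ∀ e ∈ G.edgeSet, e ∉ M → e ∈ (G.deleteEdges M).edgeSet := fun e he hM =>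
    (edgeSet_deleteEdges M).symm ▸ ⟨he, hM⟩
  refine EdgeColorable.edgeChromaticNumber_le ⟨fun e => if e ∈ M then m else c e,
    fun e he => ?_, fun e₁ h₁ e₂ h₂ hne ⟨v, hv₁, hv₂⟩ => ?_⟩
  · by_cases h : e ∈ M
    · simp [h]
    · simpa [h] using (hc.1 e (hmem e he h)).trans (Nat.lt_succ_self m)
  by_cases m₁ : e₁ ∈ M <;> by_cases m₂ : e₂ ∈ M
  · exact absurd hv₂ (hM e₁ m₁ e₂ m₂ hne v hv₁)
  · simpa [m₁, m₂] using (hc.1 e₂ (hmem e₂ h₂ m₂)).ne'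
  · simpa [m₁, m₂] using (hc.1 e₁ (hmem e₁ h₁ m₁)).ne
  · simpa [m₁, m₂] using hc.2 e₁ (hmem e₁ h₁ m₁) e₂ (hmem e₂ h₂ m₂) hne ⟨v, hv₁, hv₂⟩

end Recoloring

/- Within the component `C` of `x`, the degree sum is at most `2 * #C - 3`, whereas the
connected graph `C` has at least `#C - 1` edges. -/
theorem SimpleGraph.eq_or_eq_or_eq_of_reachable_of_degree_le_one [Fintype V]
    {G : SimpleGraph V} [DecidableRel G.Adj] (hdeg : ∀ v, G.degree v ≤ 2) {x y z : V}
    (hy : G.Reachable x y) (hz : G.Reachable x z) (hx₁ : G.degree x ≤ 1) (hy₁ : G.degree y ≤ 1)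
    (hz₁ : G.degree z ≤ 1) : x = y ∨ x = z ∨ y = z := by
  by_contra! hne
  obtain ⟨hxy, hxz, hyz⟩ := hne
  set C := G.connectedComponentMk x
  have hxC : x ∈ C.supp := rfl
  have hyC : y ∈ C.supp := (ConnectedComponent.sound hy).symm
  have hzC : z ∈ C.supp := (ConnectedComponent.sound hz).symm
  set K : SimpleGraph C.supp := G.induce C.supp
  have hKdeg : ∀ v, K.degree v ≤ G.degree v := fun v => (Copy.induce G C.supp).degree_le v
  set T : Finset C.supp := {⟨x, hxC⟩, ⟨y, hyC⟩, ⟨z, hzC⟩}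
  have hT : T.card = 3 := by
    rw [Finset.card_insert_of_notMem (by simp [hxy, hxz]),
      Finset.card_insert_of_notMem (by simp [hyz]), Finset.card_singleton]
  have hsum : 2 * K.edgeFinset.card + 3 ≤ 2 * Fintype.card C.supp := by
    rw [← sum_degrees_eq_twice_card_edges, ← Finset.sum_add_sum_compl T]
    have h₁ : ∑ v ∈ T, K.degree v ≤ T.card := by
      refine (Finset.sum_le_sum fun v hv => ?_).trans_eq (Finset.card_eq_sum_ones T).symm
      simp only [T, Finset.mem_insert, Finset.mem_singleton] at hv
      rcases hv with rfl | rfl | rfl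
      exacts [(hKdeg _).trans hx₁, (hKdeg _).trans hy₁, (hKdeg _).trans hz₁]
    have h₂ : ∑ v ∈ Tᶜ, K.degree v ≤ 2 * Tᶜ.card := by
      rw [mul_comm, ← smul_eq_mul, ← Finset.sum_const]
      exact Finset.sum_le_sum fun v _ => (hKdeg v).trans (hdeg v)
    rw [Finset.card_compl] at h₂
    have := Finset.card_le_univ T
    omega
  have hconn : Nat.card C.supp ≤ Nat.card K.edgeSet + 1 :=
    C.connected_toSimpleGraph.card_vert_le_card_edgeSet_add_one
  rw [Nat.card_eq_fintype_card, Nat.card_eq_fintype_card, ← edgeFinset_card] at hconn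
  omega

section Kempe

variable {G : SimpleGraph V} {n : ℕ} {c : Sym2 V → ℕ} {a b : ℕ} {x w : V} {e : Sym2 V}

def kempeGraph (G : SimpleGraph V) (c : Sym2 V → ℕ) (a b : ℕ) : SimpleGraph V where
  Adj v w := G.Adj v w ∧ (c s(v, w) = a ∨ c s(v, w) = b)
  symm := ⟨fun v w h => by rwa [Sym2.eq_swap, G.adj_comm]⟩
  loopless := ⟨fun v h => G.loopless.irrefl v h.1⟩

theorem kempeGraph_adj {v w : V} :
    (kempeGraph G c a b).Adj v w ↔ G.Adj v w ∧ (c s(v, w) = a ∨ c s(v, w) = b) :=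
  Iff.rfl

theorem kempeGraph_le : kempeGraph G c a b ≤ G := fun _ _ h => (kempeGraph_adj.1 h).1

theorem mem_edgeSet_kempeGraph :
    e ∈ (kempeGraph G c a b).edgeSet ↔ e ∈ G.edgeSet ∧ (c e = a ∨ c e = b) := by
  induction e using Sym2.ind with
  | _ v w => exact kempeGraph_adj

noncomputable def kempeSwap (G : SimpleGraph V) (c : Sym2 V → ℕ) (a b : ℕ) (x : V) :
    Sym2 V → ℕ := fun e =>
  if ∃ v ∈ e, (kempeGraph G c a b).Reachable x v then Equiv.swap a b (c e) else c e

theorem kempeSwap_of_reachable (hw : w ∈ e) (hr : (kempeGraph G c a b).Reachable x w) :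
    kempeSwap G c a b x e = Equiv.swap a b (c e) :=
  if_pos ⟨w, hw, hr⟩

theorem kempeSwap_of_not_reachable (he : e ∈ G.edgeSet) (hw : w ∈ e)
    (hnr : ¬ (kempeGraph G c a b).Reachable x w) : kempeSwap G c a b x e = c e := by
  unfold kempeSwap
  split_ifs with h
  · obtain ⟨v, hv, hrv⟩ := h
    by_cases hab : c e = a ∨ c e = b
    · have hK : e ∈ (kempeGraph G c a b).edgeSet := mem_edgeSet_kempeGraph.2 ⟨he, hab⟩
      refine absurd ?_ hnr
      induction e using Sym2.ind with
      | _ p q =>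
        rcases Sym2.mem_iff.1 hv with rfl | rfl <;> rcases Sym2.mem_iff.1 hw with rfl | rfl
        exacts [hrv, hrv.trans (Adj.reachable hK), hrv.trans (Adj.reachable hK).symm, hrv]
    · rw [not_or] at hab
      exact Equiv.swap_apply_of_ne_of_ne hab.1 hab.2
  · rfl

theorem kempeSwap_eq_of_ne (ha : c e ≠ a) (hb : c e ≠ b) : kempeSwap G c a b x e = c e := by
  unfold kempeSwap
  split_ifs
  exacts [Equiv.swap_apply_of_ne_of_ne ha hb, rfl]

theorem IsProperEdgeColoring.kempeSwap (hc : IsProperEdgeColoring G n c) (ha : a < n)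
    (hb : b < n) : IsProperEdgeColoring G n (kempeSwap G c a b x) := by
  refine ⟨fun e he => ?_, fun e₁ h₁ e₂ h₂ hne ⟨v, hv₁, hv₂⟩ => ?_⟩
  · unfold _root_.kempeSwap
    split_ifs
    · rw [Equiv.swap_apply_def]
      split_ifs
      exacts [hb, ha, hc.1 e he]
    · exact hc.1 e he
  · have hne' := hc.2 e₁ h₁ e₂ h₂ hne ⟨v, hv₁, hv₂⟩
    by_cases hr : (kempeGraph G c a b).Reachable x v
    · rw [kempeSwap_of_reachable hv₁ hr, kempeSwap_of_reachable hv₂ hr]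
      exact (Equiv.injective _).ne hne'
    · rwa [kempeSwap_of_not_reachable h₁ hv₁ hr, kempeSwap_of_not_reachable h₂ hv₂ hr]

theorem isFreeColor_kempeSwap_iff_of_reachable {γ : ℕ}
    (hr : (kempeGraph G c a b).Reachable x w) :
    IsFreeColor G (kempeSwap G c a b x) w γ ↔ IsFreeColor G c w (Equiv.swap a b γ) := by
  refine forall₂_congr fun e _ => imp_congr_right fun hw => ?_
  rw [kempeSwap_of_reachable hw hr, Ne, Equiv.swap_apply_eq_iff]

theorem isFreeColor_kempeSwap_iff_of_not_reachable {γ : ℕ}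
    (hnr : ¬ (kempeGraph G c a b).Reachable x w) :
    IsFreeColor G (kempeSwap G c a b x) w γ ↔ IsFreeColor G c w γ :=
  forall₂_congr fun _ he => imp_congr_right fun hw => by
    rw [kempeSwap_of_not_reachable he hw hnr]

theorem isFreeColor_kempeSwap_iff {γ : ℕ} (ha : γ ≠ a) (hb : γ ≠ b) :
    IsFreeColor G (kempeSwap G c a b x) w γ ↔ IsFreeColor G c w γ := by
  by_cases hr : (kempeGraph G c a b).Reachable x w
  · rw [isFreeColor_kempeSwap_iff_of_reachable hr, Equiv.swap_apply_of_ne_of_ne ha hb]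
  · exact isFreeColor_kempeSwap_iff_of_not_reachable hr

theorem isFreeColor_kempeSwap_of_ne (ha : c e ≠ a) (hb : c e ≠ b)
    (h : IsFreeColor G c w (c e)) :
    IsFreeColor G (kempeSwap G c a b x) w (kempeSwap G c a b x e) :=
  kempeSwap_eq_of_ne ha hb ▸ (isFreeColor_kempeSwap_iff ha hb).2 h

variable [Fintype V]

theorem IsProperEdgeColoring.degree_kempeGraph_le_two (hc : IsProperEdgeColoring G n c)
    (v : V) : (kempeGraph G c a b).degree v ≤ 2 :=
  (hc.degree_le_card kempeGraph_le {a, b} fun _ h => by simpa using (kempeGraph_adj.1 h).2).trans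
    Finset.card_le_two

theorem IsProperEdgeColoring.degree_kempeGraph_le_one (hc : IsProperEdgeColoring G n c)
    (hv : IsFreeColor G c w a ∨ IsFreeColor G c w b) : (kempeGraph G c a b).degree w ≤ 1 := by
  rcases hv with hv | hv
  · refine (hc.degree_le_card kempeGraph_le {b} fun u h => ?_).trans_eq (Finset.card_singleton b)
    obtain ⟨hwu, hab⟩ := kempeGraph_adj.1 h
    exact Finset.mem_singleton.2 (hab.resolve_left (hv _ hwu (Sym2.mem_mk_left w u)))
  · refine (hc.degree_le_card kempeGraph_le {a} fun u h => ?_).trans_eq (Finset.card_singleton a)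
    obtain ⟨hwu, hab⟩ := kempeGraph_adj.1 h
    exact Finset.mem_singleton.2 (hab.resolve_right (hv _ hwu (Sym2.mem_mk_left w u)))

theorem IsProperEdgeColoring.not_reachable_kempeGraph (hc : IsProperEdgeColoring G n c)
    {w₁ w₂ : V} (hx : IsFreeColor G c x a) (h₁ : IsFreeColor G c w₁ b)
    (h₂ : IsFreeColor G c w₂ b) (hx₁ : x ≠ w₁) (hx₂ : x ≠ w₂) (h₁₂ : w₁ ≠ w₂)
    (hr₁ : (kempeGraph G c a b).Reachable x w₁) : ¬ (kempeGraph G c a b).Reachable x w₂ := by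
  intro hr₂
  rcases eq_or_eq_or_eq_of_reachable_of_degree_le_one hc.degree_kempeGraph_le_two hr₁ hr₂
    (hc.degree_kempeGraph_le_one (Or.inl hx)) (hc.degree_kempeGraph_le_one (Or.inr h₁))
    (hc.degree_kempeGraph_le_one (Or.inr h₂)) with h | h | h
  exacts [hx₁ h, hx₂ h, h₁₂ h]

end Kempe

section Fan

variable {G : SimpleGraph V} {n : ℕ} {c : Sym2 V → ℕ} {x y y' z w : V} {a γ : ℕ}

/-- A fan `y :: l` at `x` for a coloring `c` of `G.deleteEdges {s(x, y)}`. -/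
structure IsFan (G : SimpleGraph V) (c : Sym2 V → ℕ) (x y : V) (l : List V) : Prop where
  adj : ∀ f ∈ l, G.Adj x f
  nodup : (y :: l).Nodup
  isChain : (y :: l).IsChain fun f g => IsFreeColor (G.deleteEdges {s(x, y)}) c f (c s(x, g))

theorem isFan_nil (G : SimpleGraph V) (c : Sym2 V → ℕ) (x y : V) : IsFan G c x y [] :=
  ⟨by simp, List.nodup_singleton y, List.IsChain.singleton y⟩

theorem IsFan.mem_edgeSet {l : List V} (hF : IsFan G c x y l) (hz : z ∈ l) :
    s(x, z) ∈ (G.deleteEdges {s(x, y)}).edgeSet := by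
  refine mem_edgeSet_deleteEdges_singleton.2 ⟨hF.adj z hz, fun h => ?_⟩
  rw [Sym2.congr_right.1 h] at hz
  exact (List.nodup_cons.1 hF.nodup).1 hz

theorem IsFan.concat {l : List V} (hF : IsFan G c x y l) (hz : G.Adj x y') (hzl : y' ∉ y :: l)
    (hfree : IsFreeColor (G.deleteEdges {s(x, y)}) c ((y :: l).getLast (List.cons_ne_nil y l))
      (c s(x, y'))) :
    IsFan G c x y (l ++ [y']) := by
  refine ⟨fun f hf => ?_, ?_, ?_⟩
  · rcases List.mem_append.1 hf with hf | hf
    exacts [hF.adj f hf, List.mem_singleton.1 hf ▸ hz]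
  · rw [← List.cons_append, ← List.concat_eq_append]
    exact hF.nodup.concat hzl
  · rw [← List.cons_append]
    refine hF.isChain.append (List.IsChain.singleton y') fun u hu v hv => ?_
    rw [List.getLast?_eq_some_getLast (List.cons_ne_nil y l), Option.mem_some_iff] at hu
    rw [List.head?_cons, Option.mem_some_iff] at hv
    exact hu ▸ hv ▸ hfree

theorem IsFreeColor.update_of_ne (h : IsFreeColor (G.deleteEdges {s(x, y)}) c w γ)
    (hwx : w ≠ x) (hwy : w ≠ y) (a : ℕ) :
    IsFreeColor (G.deleteEdges {s(x, z)}) (Function.update c s(x, y) a) w γ := by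
  intro e he hwe
  have hne : e ≠ s(x, y) := by
    rintro rfl
    rcases Sym2.mem_iff.1 hwe with rfl | rfl
    exacts [hwx rfl, hwy rfl]
  rw [Function.update_of_ne hne]
  obtain ⟨heG, -⟩ := mem_edgeSet_deleteEdges_singleton.1 he
  exact h e (mem_edgeSet_deleteEdges_singleton.2 ⟨heG, hne⟩) hwe

theorem IsFreeColor.update_center (h : IsFreeColor (G.deleteEdges {s(x, y)}) c x γ)
    (hz : s(x, z) ∈ (G.deleteEdges {s(x, y)}).edgeSet) :
    IsFreeColor (G.deleteEdges {s(x, z)}) (Function.update c s(x, y) (c s(x, z))) x γ := by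
  intro e he hxe
  by_cases hne : e = s(x, y)
  · rw [hne, Function.update_self]
    exact h _ hz (Sym2.mem_mk_left x z)
  · rw [Function.update_of_ne hne]
    obtain ⟨heG, -⟩ := mem_edgeSet_deleteEdges_singleton.1 he
    exact h e (mem_edgeSet_deleteEdges_singleton.2 ⟨heG, hne⟩) hxe

theorem IsFan.rotate {l : List V} (hF : IsFan G c x y (z :: l))
    (hc : IsProperEdgeColoring (G.deleteEdges {s(x, y)}) n c) :
    IsFan G (Function.update c s(x, y) (c s(x, z))) x z l ∧
      IsProperEdgeColoring (G.deleteEdges {s(x, z)}) n (Function.update c s(x, y) (c s(x, z))) := by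
  have hz := hF.mem_edgeSet (List.mem_cons_self ..)
  obtain ⟨hyz, hzl⟩ := List.nodup_cons.1 hF.nodup
  obtain ⟨hfree, hchain⟩ := List.isChain_cons_cons.1 hF.isChain
  have hle : (G.deleteEdges {s(x, z)}).deleteEdges {s(x, y)} ≤ G.deleteEdges {s(x, y)} := by
    rw [deleteEdges_deleteEdges]
    exact deleteEdges_anti Set.subset_union_right
  refine ⟨⟨fun f hf => hF.adj f (List.mem_cons_of_mem z hf), hzl, ?_⟩,
    (hc.mono hle).update (hc.1 _ hz) (fun e he hxe hce => ?_) (hfree.mono hle)⟩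
  · refine hchain.imp_of_mem_imp fun f g hf hg hfg => ?_
    have hgy : s(x, g) ≠ s(x, y) := fun h => hyz (Sym2.congr_right.1 h ▸ hg)
    rw [Function.update_of_ne hgy]
    exact hfg.update_of_ne (hF.adj f hf).ne' (fun h => hyz (h ▸ hf)) _
  · have he' := mem_edgeSet_deleteEdges_singleton.1 he
    exact hc.2 e (edgeSet_mono hle he) _ hz (mem_edgeSet_deleteEdges_singleton.1 he'.1).2
      ⟨x, hxe, Sym2.mem_mk_left x z⟩ hce

theorem IsFan.edgeColorable {l : List V} (hF : IsFan G c x y l)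
    (hc : IsProperEdgeColoring (G.deleteEdges {s(x, y)}) n c) (hγ : γ < n)
    (hx : IsFreeColor (G.deleteEdges {s(x, y)}) c x γ)
    (hlast : IsFreeColor (G.deleteEdges {s(x, y)}) c ((y :: l).getLast (List.cons_ne_nil y l))
      γ) :
    G.EdgeColorable n := by
  induction l generalizing y c with
  | nil => exact ⟨_, hc.update hγ hx hlast⟩
  | cons z l ih =>
    obtain ⟨hF', hc'⟩ := hF.rotate hc
    have hzl : (z :: l).getLast (List.cons_ne_nil z l) ∈ z :: l := List.getLast_mem _
    refine ih hF' hc' (hx.update_center (hF.mem_edgeSet (List.mem_cons_self ..))) ?_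
    rw [List.getLast_cons_cons] at hlast
    exact hlast.update_of_ne (hF.adj _ hzl).ne'
      (fun h => (List.nodup_cons.1 hF.nodup).1 (h ▸ hzl)) _

theorem IsFan.isFreeColor_getLast {l₁ l₂ : List V} (hF : IsFan G c x y (l₁ ++ y' :: l₂)) :
    IsFreeColor (G.deleteEdges {s(x, y)}) c ((y :: l₁).getLast (List.cons_ne_nil y l₁))
      (c s(x, y')) := by
  have hchain := hF.isChain
  rw [← List.cons_append] at hchain
  exact hchain.rel_getLast_head_of_append (List.cons_ne_nil _ _) (List.cons_ne_nil _ _)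

theorem IsFan.isFreeColor_kempeSwap {l : List V} (hF : IsFan G c x y l)
    (hc : IsProperEdgeColoring (G.deleteEdges {s(x, y)}) n c)
    (hax : IsFreeColor (G.deleteEdges {s(x, y)}) c x a) (hy' : y' ∈ l) {f g : V} (hg : g ∈ l)
    (hgy' : g ≠ y') (hfg : IsFreeColor (G.deleteEdges {s(x, y)}) c f (c s(x, g))) :
    IsFreeColor (G.deleteEdges {s(x, y)}) (kempeSwap (G.deleteEdges {s(x, y)}) c a (c s(x, y')) x)
      f (kempeSwap (G.deleteEdges {s(x, y)}) c a (c s(x, y')) x s(x, g)) :=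
  isFreeColor_kempeSwap_of_ne (hax _ (hF.mem_edgeSet hg) (Sym2.mem_mk_left _ _))
    (hc.ne_of_adj (hF.mem_edgeSet hg) (hF.mem_edgeSet hy') hgy') hfg

theorem IsFan.kempeSwap_prefix {l₁ l₂ : List V} (hF : IsFan G c x y (l₁ ++ y' :: l₂))
    (hc : IsProperEdgeColoring (G.deleteEdges {s(x, y)}) n c)
    (hax : IsFreeColor (G.deleteEdges {s(x, y)}) c x a) :
    IsFan G (kempeSwap (G.deleteEdges {s(x, y)}) c a (c s(x, y')) x) x y l₁ := by
  have hnodup : ((y :: l₁) ++ (y' :: l₂)).Nodup := hF.nodup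
  have hchain := hF.isChain
  rw [← List.cons_append] at hchain
  refine ⟨fun f hf => hF.adj f (by simp [hf]), (List.nodup_append.1 hnodup).1,
    hchain.left_of_append.imp_of_mem_tail_imp fun f g _ hg => ?_⟩
  refine hF.isFreeColor_kempeSwap hc hax (by simp) (List.mem_append_left _ hg) fun h => ?_
  exact (List.nodup_append.1 hnodup).2.2 _ (List.mem_cons_of_mem y hg) _ (by simp) h

theorem IsFan.kempeSwap_of_reachable {l₁ l₂ : List V} (hF : IsFan G c x y (l₁ ++ y' :: l₂))
    (hc : IsProperEdgeColoring (G.deleteEdges {s(x, y)}) n c)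
    (hax : IsFreeColor (G.deleteEdges {s(x, y)}) c x a)
    (hp : (kempeGraph (G.deleteEdges {s(x, y)}) c a (c s(x, y'))).Reachable x
      ((y :: l₁).getLast (List.cons_ne_nil y l₁))) :
    IsFan G (kempeSwap (G.deleteEdges {s(x, y)}) c a (c s(x, y')) x) x y (l₁ ++ y' :: l₂) := by
  have hy'l₂ : y' ∉ l₂ := (List.nodup_cons.1 (List.nodup_append.1
    (hF.nodup.sublist (List.sublist_cons_self y _))).2.1).1
  have hchain := hF.isChain
  refine ⟨hF.adj, hF.nodup, ?_⟩
  rw [← List.cons_append] at hchain ⊢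
  refine (hF.kempeSwap_prefix hc hax).isChain.append
    (hchain.right_of_append.imp_of_mem_tail_imp fun f g _ hg => ?_) fun u hu v hv => ?_
  · exact hF.isFreeColor_kempeSwap hc hax (by simp) (by simp [List.mem_of_mem_tail hg])
      fun h => hy'l₂ (h ▸ hg)
  rw [List.getLast?_eq_some_getLast (List.cons_ne_nil y l₁), Option.mem_some_iff] at hu
  rw [List.head?_cons, Option.mem_some_iff] at hv
  subst hu hv
  -- the swap recolors `s(x, y')` with `a`, which is now free at the predecessor of `y'`
  rw [_root_.kempeSwap_of_reachable (Sym2.mem_mk_left x y') (Reachable.refl x),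
    Equiv.swap_apply_right, isFreeColor_kempeSwap_iff_of_reachable hp, Equiv.swap_apply_left]
  exact hF.isFreeColor_getLast

end Fan

section Vizing

variable [Fintype V] {G : SimpleGraph V} {n : ℕ} {c : Sym2 V → ℕ} {x y y' : V} {a : ℕ}

theorem exists_isFan_maximal (G : SimpleGraph V) (c : Sym2 V → ℕ) (x y : V) :
    ∃ l, IsFan G c x y l ∧ ∀ l', IsFan G c x y l' → l'.length ≤ l.length := by
  set S := {m | ∃ l, IsFan G c x y l ∧ l.length = m}
  have hbdd : BddAbove S := ⟨Fintype.card V, by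
    rintro _ ⟨l, hF, rfl⟩
    exact (Nat.le_succ _).trans hF.nodup.length_le_card⟩
  obtain ⟨l, hF, hl⟩ := Nat.sSup_mem (s := S) ⟨0, [], isFan_nil G c x y, rfl⟩ hbdd
  exact ⟨l, hF, fun l' hF' => hl ▸ le_csSup hbdd ⟨l', hF', rfl⟩⟩

theorem IsFan.edgeColorable_of_kempe {l₁ l₂ : List V} (hF : IsFan G c x y (l₁ ++ y' :: l₂))
    (hc : IsProperEdgeColoring (G.deleteEdges {s(x, y)}) n c) (ha : a < n)
    (hax : IsFreeColor (G.deleteEdges {s(x, y)}) c x a)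
    (hdz : IsFreeColor (G.deleteEdges {s(x, y)}) c
      ((y :: (l₁ ++ y' :: l₂)).getLast (List.cons_ne_nil _ _)) (c s(x, y'))) :
    G.EdgeColorable n := by
  set G₁ := G.deleteEdges {s(x, y)}
  set d := c s(x, y')
  set p := (y :: l₁).getLast (List.cons_ne_nil _ _)
  set z := (y :: (l₁ ++ y' :: l₂)).getLast (List.cons_ne_nil _ _)
  have hy'E : s(x, y') ∈ G₁.edgeSet := hF.mem_edgeSet (by simp)
  have hd : d < n := hc.1 _ hy'E
  have hpd : IsFreeColor G₁ c p d := hF.isFreeColor_getLast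
  have hc₂ : IsProperEdgeColoring G₁ n (kempeSwap G₁ c a d x) := hc.kempeSwap ha hd
  have hdx₂ : IsFreeColor G₁ (kempeSwap G₁ c a d x) x d := by
    rwa [isFreeColor_kempeSwap_iff_of_reachable (Reachable.refl x), Equiv.swap_apply_right]
  -- If the Kempe chain from `x` reaches `p`, it misses `z` and the whole fan survives the swap;
  -- otherwise the fan up to `p` does.
  by_cases hrp : (kempeGraph G₁ c a d).Reachable x p
  · have hzl₂ : z ∈ y' :: l₂ := by
      have hz : z = (y' :: l₂).getLast (List.cons_ne_nil _ _) := by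
        simp only [z, ← List.cons_append]
        exact List.getLast_append_of_ne_nil _ _
      exact hz ▸ List.getLast_mem _
    have hxp : x ≠ p := fun h => hpd _ hy'E (h ▸ Sym2.mem_mk_left x y') rfl
    have hxz : x ≠ z := fun h => hdz _ hy'E (h ▸ Sym2.mem_mk_left x y') rfl
    have hpz : p ≠ z := (List.nodup_append.1 (hF.nodup : ((y :: l₁) ++ (y' :: l₂)).Nodup)).2.2 _
      (List.getLast_mem _) _ hzl₂
    have hrz := hc.not_reachable_kempeGraph hax hpd hdz hxp hxz hpz hrp
    exact (hF.kempeSwap_of_reachable hc hax hrp).edgeColorable hc₂ hd hdx₂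
      ((isFreeColor_kempeSwap_iff_of_not_reachable hrz).2 hdz)
  · exact (hF.kempeSwap_prefix hc hax).edgeColorable hc₂ hd hdx₂
      ((isFreeColor_kempeSwap_iff_of_not_reachable hrp).2 hpd)

theorem SimpleGraph.EdgeColorable.of_deleteEdges_singleton [DecidableRel G.Adj]
    (hdeg : ∀ v, G.degree v < n) (hcol : (G.deleteEdges {s(x, y)}).EdgeColorable n) :
    G.EdgeColorable n := by
  obtain ⟨c, hc⟩ := hcol
  have hdeg₁ : ∀ v, (G.deleteEdges {s(x, y)}).degree v < n := fun v =>
    (degree_le_of_le (deleteEdges_le _)).trans_lt (hdeg v)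
  obtain ⟨l, hF, hmax⟩ := exists_isFan_maximal G c x y
  obtain ⟨d, hd, hdz⟩ :=
    exists_isFreeColor_of_degree_lt c (hdeg₁ ((y :: l).getLast (List.cons_ne_nil y l)))
  by_cases hdx : IsFreeColor (G.deleteEdges {s(x, y)}) c x d
  · exact hF.edgeColorable hc hd hdx hdz
  obtain ⟨a, ha, hax⟩ := exists_isFreeColor_of_degree_lt c (hdeg₁ x)
  obtain ⟨y', hxy', hy'⟩ := exists_adj_of_not_isFreeColor hdx
  have hy'l : y' ∈ l := by
    have hy'y : y' ≠ y := fun h => (deleteEdges_adj.1 hxy').2 (h ▸ rfl)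
    by_contra h
    have := hmax _ (hF.concat (deleteEdges_le _ hxy') (by simp [hy'y, h]) (hy' ▸ hdz))
    simp at this
  obtain ⟨l₁, l₂, rfl⟩ := List.append_of_mem hy'l
  exact hF.edgeColorable_of_kempe hc ha hax (hy' ▸ hdz)

theorem edgeColorable_of_forall_degree_lt [DecidableRel G.Adj] (hdeg : ∀ v, G.degree v < n) :
    G.EdgeColorable n := by
  suffices h : ∀ H : SimpleGraph V, ∀ [DecidableRel H.Adj], (∀ v, H.degree v < n) →
      H.EdgeColorable n from h G hdeg
  intro H
  induction H using WellFoundedLT.induction with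
  | _ H ih =>
    intro _ hdeg
    rcases H.edgeSet.eq_empty_or_nonempty with h | ⟨e, he⟩
    · exact ⟨fun _ => 0, by simp [h], by simp [h]⟩
    induction e using Sym2.ind with
    | _ x y =>
      exact .of_deleteEdges_singleton hdeg
        (ih _ (deleteEdges_singleton_lt he) fun v =>
          (degree_le_of_le (deleteEdges_le _)).trans_lt (hdeg v))

theorem edgeChromaticNumber_le_maxDegree_add_one (G : SimpleGraph V) [DecidableRel G.Adj] :
    edgeChromaticNumber G ≤ G.maxDegree + 1 :=
  (edgeColorable_of_forall_degree_lt fun v =>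
    Nat.lt_succ_of_le (degree_le_maxDegree G v)).edgeChromaticNumber_le

end Vizing

section Degree

variable {G H : SimpleGraph V} {v w : V}

theorem degree_lt_degree_of_le [Fintype (H.neighborSet v)] [Fintype (G.neighborSet v)]
    (hle : H ≤ G) (hG : G.Adj v w) (hH : ¬ H.Adj v w) : H.degree v < G.degree v := by
  simp_rw [← card_neighborSet_eq_degree]
  exact Set.card_lt_card (Set.ssubset_iff_of_subset (fun x hx => hle hx) |>.2 ⟨w, hG, hH⟩)

theorem degree_le_degree_deleteEdges_add_one [Fintype (G.neighborSet v)]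
    [Fintype ((G.deleteEdges {s(v, w)}).neighborSet v)] :
    G.degree v ≤ (G.deleteEdges {s(v, w)}).degree v + 1 := by
  simp_rw [← card_neighborFinset_eq_degree]
  refine (Finset.card_le_card fun x hx => ?_).trans (Finset.card_insert_le w _)
  rw [Finset.mem_insert, mem_neighborFinset, deleteEdges_adj, Set.mem_singleton_iff]
  exact or_iff_not_imp_left.2 fun h =>
    ⟨(mem_neighborFinset _ _ _).1 hx, fun h' => h (Sym2.congr_right.1 h')⟩

theorem degree_deleteEdges_of_notMem {e : Sym2 V} (hv : v ∉ e) [Fintype (G.neighborSet v)]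
    [Fintype ((G.deleteEdges {e}).neighborSet v)] :
    (G.deleteEdges {e}).degree v = G.degree v := by
  simp_rw [← card_neighborSet_eq_degree]
  congr! 2
  ext x
  simp only [mem_neighborSet, deleteEdges_adj, Set.mem_singleton_iff, and_iff_left_iff_imp]
  exact fun _ h => hv (h ▸ Sym2.mem_mk_left v x)

end Degree

theorem SimpleGraph.Subgraph.exists_adj_not_adj_of_ne_top {W : Type*} {G : SimpleGraph W}
    (hG : ∀ a, ∃ b, G.Adj a b) {H : G.Subgraph} (hH : H ≠ ⊤) : ∃ a b, G.Adj a b ∧ ¬ H.Adj a b := by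
  by_contra! h
  refine hH (Subgraph.ext (Set.eq_univ_of_forall fun a => ?_) ?_)
  · obtain ⟨b, hab⟩ := hG a
    exact H.edge_vert (h a b hab)
  · ext a b
    exact ⟨fun hab => H.adj_sub hab, fun hab => h a b hab⟩

theorem exists_lt_ne_ne {n : ℕ} (hn : 3 ≤ n) (a b : ℕ) : ∃ c < n, c ≠ a ∧ c ≠ b := by
  by_cases h₀ : a ≠ 0 ∧ b ≠ 0
  · exact ⟨0, by omega, h₀.1.symm, h₀.2.symm⟩
  by_cases h₁ : a ≠ 1 ∧ b ≠ 1
  · exact ⟨1, by omega, h₁.1.symm, h₁.2.symm⟩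
  exact ⟨2, by omega, by omega, by omega⟩

section Critical

variable [Fintype V] {k j : ℕ}

theorem exists_critical_le {H : SimpleGraph V} [DecidableRel H.Adj] (hΔ : H.maxDegree ≤ k)
    (hχ : k + 1 ≤ edgeChromaticNumber H) :
    ∃ K ≤ H, K.maxDegree = k ∧ edgeChromaticNumber K = k + 1 ∧
      ∀ L < K, edgeChromaticNumber L ≤ k := by
  obtain ⟨K, hKH, hKmin⟩ :=
    exists_minimal_le_of_wellFoundedLT (fun K => k + 1 ≤ edgeChromaticNumber K) H hχ
  have hcrit : ∀ L < K, edgeChromaticNumber L ≤ k := fun L hL => by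
    simpa using hKmin.not_prop_of_lt hL
  have hKχ : k + 1 ≤ edgeChromaticNumber K := hKmin.prop
  refine ⟨K, hKH, le_antisymm ((maxDegree_mono hKH).trans hΔ) ?_, le_antisymm ?_ hKχ, hcrit⟩
  · by_contra! h
    have := edgeChromaticNumber_le_maxDegree_add_one K
    omega
  · obtain ⟨e, he⟩ : K.edgeSet.Nonempty := by
      by_contra! h
      have : edgeChromaticNumber K ≤ 0 :=
        EdgeColorable.edgeChromaticNumber_le ⟨fun _ => 0, by simp [h], by simp [h]⟩
      omega
    have := edgeChromaticNumber_le_deleteEdges_add_one K {e} (by simp)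
    have := hcrit _ (deleteEdges_singleton_lt he)
    omega

theorem IsProperEdgeColoring.not_isFreeColor_of_degree_eq {K : SimpleGraph V} [DecidableRel K.Adj]
    {n : ℕ} {c : Sym2 V → ℕ} {v u w : V} {α β γ : ℕ}
    (hc : IsProperEdgeColoring (K.deleteEdges {s(v, u)}) n c) (hα : α < n) (hβ : β < n)
    (hγ : γ < n) (hαv : IsFreeColor (K.deleteEdges {s(v, u)}) c v α)
    (hγu : IsFreeColor (K.deleteEdges {s(v, u)}) c u γ) (hβα : β ≠ α) (hβγ : β ≠ γ)
    (hw : K.degree w = n) : ¬ IsFreeColor (K.deleteEdges {s(v, u)}) c w β := by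
  intro hβw
  by_cases hwv : w = v
  · subst hwv
    have := hc.degree_add_two_le hα hβ hβα.symm hαv hβw
    have := degree_le_degree_deleteEdges_add_one (G := K) (v := w) (w := u)
    omega
  by_cases hwu : w = u
  · subst hwu
    rw [Sym2.eq_swap] at hc hγu hβw
    have := hc.degree_add_two_le hγ hβ hβγ.symm hγu hβw
    have := degree_le_degree_deleteEdges_add_one (G := K) (v := w) (w := v)
    omega
  · have := hc.degree_add_card_le {β} (by simpa using hβ) (by simpa using hβw)
    rw [degree_deleteEdges_of_notMem (by simp [hwv, hwu]), Finset.card_singleton] at this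
    omega

theorem exists_le_maxDegree_le_of_critical {K : SimpleGraph V} [DecidableRel K.Adj] (hj : 2 ≤ j)
    (hΔ : K.maxDegree = j + 1) (hχ : edgeChromaticNumber K = j + 2)
    (hcrit : ∀ L < K, edgeChromaticNumber L ≤ j + 1) :
    ∃ L ≤ K, L.maxDegree ≤ j ∧ j + 1 ≤ edgeChromaticNumber L := by
  have : Nonempty V := by
    by_contra! h
    simp [maxDegree_of_subsingleton] at hΔ
  obtain ⟨v, hv⟩ := K.exists_maximal_degree_vertex
  obtain ⟨u, hvu⟩ := (K.degree_pos_iff_exists_adj v).1 (by omega)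
  set K₁ := K.deleteEdges {s(v, u)}
  obtain ⟨c, hc⟩ := edgeChromaticNumber_le_iff.1 (hcrit K₁ (deleteEdges_singleton_lt hvu))
  have hK₁ : ¬ K₁.Adj v u := by simp [K₁]
  obtain ⟨α, hα, hαv⟩ := exists_isFreeColor_of_degree_lt (n := j + 1) c
    ((degree_lt_degree_of_le (deleteEdges_le _) hvu hK₁).trans_le (by omega))
  obtain ⟨γ, hγ, hγu⟩ := exists_isFreeColor_of_degree_lt c
    ((degree_lt_degree_of_le (deleteEdges_le _) hvu.symm fun h => hK₁ h.symm).trans_le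
      (hΔ ▸ K.degree_le_maxDegree u))
  have hαγ : α ≠ γ := by
    rintro rfl
    have := EdgeColorable.edgeChromaticNumber_le ⟨_, hc.update hα hαv hγu⟩
    omega
  obtain ⟨β, hβ, hβα, hβγ⟩ := exists_lt_ne_ne (by omega : 3 ≤ j + 1) α γ
  set M := {e | e ∈ K₁.edgeSet ∧ c e = β}
  refine ⟨K.deleteEdges M, deleteEdges_le _, ?_, ?_⟩
  · convert maxDegree_le_of_forall_degree_le (K.deleteEdges M) j fun w => ?_
    by_cases hw : K.degree w ≤ j
    · exact (degree_le_of_le (deleteEdges_le _)).trans hw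
    have hw' : K.degree w = j + 1 := le_antisymm (hΔ ▸ K.degree_le_maxDegree w) (by omega)
    obtain ⟨x, hwx, hcx⟩ := exists_adj_of_not_isFreeColor
      (hc.not_isFreeColor_of_degree_eq hα hβ hγ hαv hγu hβα hβγ hw')
    have := degree_lt_degree_of_le (deleteEdges_le M) (deleteEdges_le _ hwx)
      fun h => (deleteEdges_adj.1 h).2 ⟨hwx, hcx⟩
    omega
  · have := edgeChromaticNumber_le_deleteEdges_add_one K M fun e₁ h₁ e₂ h₂ hne x hx₁ hx₂ =>
      hc.2 e₁ h₁.1 e₂ h₂.1 hne ⟨x, hx₁, hx₂⟩ (h₁.2.trans h₂.2.symm)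
    omega

theorem exists_le_maxDegree_le_lt_edgeChromaticNumber {H : SimpleGraph V} (hk : 2 ≤ k) (hkj : k ≤ j)
    (hΔ : H.maxDegree ≤ j) (hχ : j + 1 ≤ edgeChromaticNumber H) :
    ∃ L ≤ H, L.maxDegree ≤ k ∧ k + 1 ≤ edgeChromaticNumber L := by
  induction j, hkj using Nat.le_induction generalizing H with
  | base => exact ⟨H, le_rfl, hΔ, hχ⟩
  | succ j hkj ih =>
    obtain ⟨K, hKH, hKΔ, hKχ, hcrit⟩ := exists_critical_le hΔ hχ
    obtain ⟨L, hLK, hLΔ, hLχ⟩ := exists_le_maxDegree_le_of_critical (hk.trans hkj) hKΔ hKχ hcrit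
    obtain ⟨L', hL'L, hL'⟩ := ih hLΔ hLχ
    exact ⟨L', hL'L.trans (hLK.trans hKH), hL'⟩

theorem exists_subgraph_isKCritical {G K : SimpleGraph V} (hKG : K ≤ G) (hΔ : K.maxDegree = k)
    (hχ : edgeChromaticNumber K = k + 1) (hcrit : ∀ L < K, edgeChromaticNumber L ≤ k) :
    ∃ H : G.Subgraph, IsKCritical H.coe k := by
  let H : G.Subgraph :=
    { verts := K.support
      Adj := K.Adj
      adj_sub := fun h => hKG h
      edge_vert := fun h => ⟨_, h⟩
      symm := K.symm }
  have hH : H.coe = K.induce K.support := rfl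
  have hHχ : edgeChromaticNumber H.coe = k + 1 := by
    rw [hH, edgeChromaticNumber_induce_of_support_subset subset_rfl, hχ]
  have hHΔ : maxDeg H.coe = k := by
    rw [hH, maxDeg_eq_maxDegree, maxDegree_induce_of_support_subset subset_rfl, hΔ]
  refine ⟨H, ⟨by omega, fun H' hH' => ?_⟩, hHΔ⟩
  have hnbr : ∀ a : H.verts, ∃ b, H.coe.Adj a b := fun a => by
    obtain ⟨b, hb⟩ := K.mem_support.1 a.2
    exact ⟨⟨b, K.mem_support.2 ⟨a, hb.symm⟩⟩, hb⟩
  obtain ⟨a, b, hab, hH'ab⟩ := Subgraph.exists_adj_not_adj_of_ne_top hnbr hH'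
  have hf : ∀ x y : H'.verts, H'.coe.Adj x y → (K.deleteEdges {s(a.1, b.1)}).Adj x.1.1 y.1.1 := by
    intro x y hxy
    refine deleteEdges_adj.2 ⟨H'.adj_sub hxy, fun h => hH'ab ?_⟩
    rcases Sym2.eq_iff.1 h with ⟨hx, hy⟩ | ⟨hx, hy⟩
    · rwa [← Subtype.ext hx, ← Subtype.ext hy]
    · rw [← Subtype.ext hx, ← Subtype.ext hy]
      exact hxy.symm
  let f : Copy H'.coe (K.deleteEdges {s(a.1, b.1)}) :=
    ⟨⟨fun x => x.1.1, hf _ _⟩, fun x y h => Subtype.ext (Subtype.ext h)⟩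
  rw [hHχ]
  exact Nat.lt_succ_of_le (f.edgeChromaticNumber_le.trans (hcrit _ (deleteEdges_singleton_lt hab)))

end Critical

/-- If `G` is class 2, then for every `k` with `2 ≤ k ≤ Δ(G)`, `G` contains a
`k`-critical subgraph. -/
theorem class_two_contains_critical_subgraph [Fintype V] (G : SimpleGraph V)
    (hG : edgeChromaticNumber G ≠ maxDeg G) :
    ∀ k : ℕ, 2 ≤ k → k ≤ maxDeg G → ∃ H : G.Subgraph, IsKCritical H.coe k := by
  intro k hk hkΔ
  rw [maxDeg_eq_maxDegree] at hG hkΔ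
  have hχ : G.maxDegree + 1 ≤ edgeChromaticNumber G :=
    lt_of_le_of_ne (maxDegree_le_edgeChromaticNumber G) (Ne.symm hG)
  obtain ⟨L, hLG, hLΔ, hLχ⟩ := exists_le_maxDegree_le_lt_edgeChromaticNumber hk hkΔ le_rfl hχ
  obtain ⟨K, hKL, hKΔ, hKχ, hcrit⟩ := exists_critical_le hLΔ hLχ
  exact exists_subgraph_isKCritical (hKL.trans hLG) hKΔ hKχ hcrit
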